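/- (Correctness of the Thomas algorithm for the matrix equation D·P = M) Under the tridiagonal setup with all pivots u i nonzero, D is invertible; moreover, for any natural number m and any n×m real matrix M, if Y is defined row-wise by Y(0,·) = M(0,·), Y(i,·) = M(i,·) − l i · Y(i−1,·) for i ≥ 1, and P is defined row-wise by P(n−1,·) = (1/u(n−1)) · Y(n−1,·), P(i,·) = (1/u i) · (Y(i,·) − c i · P(i+1,·)) for i ≤ n−2, then D · P = M, i.e. P = D⁻¹ · M. -/

import Mathlib

/-!
Gaussian elimination without pivoting factors the tridiagonal matrix as `D = L U`, where `L` is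
unit lower bidiagonal with subdiagonal `l` and `U` is upper bidiagonal with diagonal `u` and
superdiagonal `c`. The forward sweep solves `L Y = M` and the backward sweep solves `U P = Y`,
so `D P = L U P = M`; and `det D = ∏ i, u i ≠ 0`.
-/

open Matrix

lemma Fin.val_eq_zero_or_exists_val_eq_succ {n : ℕ} (i : Fin n) :
    (i : ℕ) = 0 ∨ ∃ i' : Fin n, (i : ℕ) = i' + 1 := by
  rcases Nat.eq_zero_or_eq_succ_pred i with h | h
  · exact .inl h
  · exact .inr ⟨⟨(i : ℕ) - 1, by omega⟩, h⟩

lemma Fin.val_succ_eq_or_exists_val_eq_succ {n : ℕ} (i : Fin n) :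
    (i : ℕ) + 1 = n ∨ ∃ i' : Fin n, (i' : ℕ) = i + 1 := by
  by_cases h : (i : ℕ) + 1 = n
  · exact .inl h
  · exact .inr ⟨⟨(i : ℕ) + 1, by omega⟩, rfl⟩

namespace Matrix

variable {R α : Type*} {n : ℕ}

def lowerBidiagonal [Zero R] (b s : Fin n → R) : Matrix (Fin n) (Fin n) R :=
  of fun i k => if i = k then b i else if (i : ℕ) = k + 1 then s i else 0

def upperBidiagonal [Zero R] (b s : Fin n → R) : Matrix (Fin n) (Fin n) R :=
  of fun i k => if i = k then b i else if (k : ℕ) = i + 1 then s i else 0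

def tridiagonal [Zero R] (b s t : Fin n → R) : Matrix (Fin n) (Fin n) R :=
  of fun i k =>
    if i = k then b i else if (i : ℕ) = k + 1 then s i else if (k : ℕ) = i + 1 then t i else 0

section Triangular

variable (b s : Fin n → R)

lemma isLowerTriangular_lowerBidiagonal [Zero R] : (lowerBidiagonal b s).IsLowerTriangular := by
  intro i k h
  have : (i : ℕ) < k := h
  simp only [lowerBidiagonal, of_apply]
  rw [if_neg (by rintro rfl; omega), if_neg (by omega)]

lemma isUpperTriangular_upperBidiagonal [Zero R] : (upperBidiagonal b s).IsUpperTriangular := by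
  intro i k h
  have : (k : ℕ) < i := h
  simp only [upperBidiagonal, of_apply]
  rw [if_neg (by rintro rfl; omega), if_neg (by omega)]

lemma det_lowerBidiagonal [CommRing R] : (lowerBidiagonal b s).det = ∏ i, b i := by
  rw [det_of_isLowerTriangular _ (isLowerTriangular_lowerBidiagonal b s)]
  simp [lowerBidiagonal]

lemma det_upperBidiagonal [CommRing R] : (upperBidiagonal b s).det = ∏ i, b i := by
  rw [det_of_isUpperTriangular (isUpperTriangular_upperBidiagonal b s)]
  simp [upperBidiagonal]

end Triangular

section RowFormulas

variable [NonAssocSemiring R] (b s : Fin n → R) (X : Matrix (Fin n) α R) (j : α)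

lemma lowerBidiagonal_mul_apply_of_val_eq_zero {i : Fin n} (hi : (i : ℕ) = 0) :
    (lowerBidiagonal b s * X) i j = b i * X i j := by
  rw [mul_apply, Fintype.sum_eq_single i]
  · simp [lowerBidiagonal]
  · intro k hk
    simp [lowerBidiagonal, Ne.symm hk, hi]

lemma lowerBidiagonal_mul_apply_of_val_eq_succ {i i' : Fin n} (hi : (i : ℕ) = i' + 1) :
    (lowerBidiagonal b s * X) i j = b i * X i j + s i * X i' j := by
  have hne : i ≠ i' := fun h => by rw [h] at hi; omega
  rw [mul_apply, Fintype.sum_eq_add i i' hne]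
  · simp [lowerBidiagonal, hne, hi]
  · rintro k ⟨hki, hki'⟩
    have : (i : ℕ) ≠ k + 1 := fun h => hki' (Fin.ext (by omega))
    simp [lowerBidiagonal, Ne.symm hki, this]

lemma upperBidiagonal_mul_apply_of_val_succ_eq {i : Fin n} (hi : (i : ℕ) + 1 = n) :
    (upperBidiagonal b s * X) i j = b i * X i j := by
  rw [mul_apply, Fintype.sum_eq_single i]
  · simp [upperBidiagonal]
  · intro k hk
    have : (k : ℕ) ≠ i + 1 := by omega
    simp [upperBidiagonal, Ne.symm hk, this]

lemma upperBidiagonal_mul_apply_of_val_eq_succ {i i' : Fin n} (hi : (i' : ℕ) = i + 1) :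
    (upperBidiagonal b s * X) i j = b i * X i j + s i * X i' j := by
  have hne : i ≠ i' := fun h => by rw [h] at hi; omega
  rw [mul_apply, Fintype.sum_eq_add i i' hne]
  · simp [upperBidiagonal, hne, hi]
  · rintro k ⟨hki, hki'⟩
    have : (k : ℕ) ≠ i + 1 := fun h => hki' (Fin.ext (by omega))
    simp [upperBidiagonal, Ne.symm hki, this]

end RowFormulas

lemma lowerBidiagonal_one_mul_eq_of_forward_substitution [Ring R] (l : Fin n → R)
    (M Y : Matrix (Fin n) α R)
    (hY0 : ∀ i : Fin n, (i : ℕ) = 0 → ∀ j : α, Y i j = M i j)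
    (hYrec : ∀ i i' : Fin n, (i : ℕ) = (i' : ℕ) + 1 → ∀ j : α, Y i j = M i j - l i * Y i' j) :
    lowerBidiagonal 1 l * Y = M := by
  ext i j
  rcases i.val_eq_zero_or_exists_val_eq_succ with hi | ⟨i', hi⟩
  · rw [lowerBidiagonal_mul_apply_of_val_eq_zero _ _ _ _ hi, Pi.one_apply, one_mul, hY0 i hi j]
  · rw [lowerBidiagonal_mul_apply_of_val_eq_succ _ _ _ _ hi, Pi.one_apply, one_mul,
      hYrec i i' hi j, sub_add_cancel]

lemma upperBidiagonal_mul_eq_of_back_substitution [DivisionRing R] (u c : Fin n → R)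
    (Y P : Matrix (Fin n) α R) (hu : ∀ i, u i ≠ 0)
    (hPlast : ∀ i : Fin n, (i : ℕ) + 1 = n → ∀ j : α, P i j = (1 / u i) * Y i j)
    (hPrec : ∀ i i' : Fin n, (i' : ℕ) = (i : ℕ) + 1 → ∀ j : α,
      P i j = (1 / u i) * (Y i j - c i * P i' j)) :
    upperBidiagonal u c * P = Y := by
  have cancel (i : Fin n) (x : R) : u i * (1 / u i * x) = x := by
    rw [← mul_assoc, mul_one_div_cancel (hu i), one_mul]
  ext i j
  rcases i.val_succ_eq_or_exists_val_eq_succ with hi | ⟨i', hi⟩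
  · rw [upperBidiagonal_mul_apply_of_val_succ_eq _ _ _ _ hi, hPlast i hi j, cancel]
  · rw [upperBidiagonal_mul_apply_of_val_eq_succ _ _ _ _ hi, hPrec i i' hi j, cancel,
      sub_add_cancel]

lemma lowerBidiagonal_one_mul_upperBidiagonal [Semiring R] (d a c u l : Fin n → R)
    (hu0 : ∀ i : Fin n, (i : ℕ) = 0 → u i = d i)
    (hsub : ∀ i i' : Fin n, (i : ℕ) = (i' : ℕ) + 1 → l i * u i' = a i)
    (hdiag : ∀ i i' : Fin n, (i : ℕ) = (i' : ℕ) + 1 → u i + l i * c i' = d i) :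
    lowerBidiagonal 1 l * upperBidiagonal u c = tridiagonal d a c := by
  ext i k
  rcases i.val_eq_zero_or_exists_val_eq_succ with hi | ⟨i', hi⟩
  · rw [lowerBidiagonal_mul_apply_of_val_eq_zero _ _ _ _ hi, Pi.one_apply, one_mul]
    simp only [upperBidiagonal, tridiagonal, of_apply]
    split_ifs <;> first | rfl | omega | exact hu0 i hi
  · rw [lowerBidiagonal_mul_apply_of_val_eq_succ _ _ _ _ hi, Pi.one_apply, one_mul]
    simp only [upperBidiagonal, tridiagonal, of_apply]
    split_ifs <;> first | omega | simp_all

end Matrix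

theorem thomas_algorithm_correct_general
    (n : ℕ) (d a c : Fin n → ℝ)
    (u l : Fin n → ℝ)
    (hu0 : ∀ i : Fin n, (i : ℕ) = 0 → u i = d i)
    (hl : ∀ i j : Fin n, (i : ℕ) = (j : ℕ) + 1 → l i = a i / u j)
    (hu : ∀ i j : Fin n, (i : ℕ) = (j : ℕ) + 1 → u i = d i - l i * c j)
    (hpiv : ∀ i : Fin n, u i ≠ 0)
    (D : Matrix (Fin n) (Fin n) ℝ)
    (hD : ∀ i j : Fin n, D i j =
      if i = j then d i
      else if (i : ℕ) = (j : ℕ) + 1 then a i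
      else if (j : ℕ) = (i : ℕ) + 1 then c i
      else 0)
    (m : ℕ) (M Y P : Matrix (Fin n) (Fin m) ℝ)
    (hY0 : ∀ i : Fin n, (i : ℕ) = 0 → ∀ j : Fin m, Y i j = M i j)
    (hYrec : ∀ i i' : Fin n, (i : ℕ) = (i' : ℕ) + 1 → ∀ j : Fin m,
      Y i j = M i j - l i * Y i' j)
    (hPlast : ∀ i : Fin n, (i : ℕ) + 1 = n → ∀ j : Fin m,
      P i j = (1 / u i) * Y i j)
    (hPrec : ∀ i i' : Fin n, (i' : ℕ) = (i : ℕ) + 1 → ∀ j : Fin m,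
      P i j = (1 / u i) * (Y i j - c i * P i' j)) :
    IsUnit D.det ∧ D * P = M ∧ P = D⁻¹ * M := by
  have hLU : D = lowerBidiagonal 1 l * upperBidiagonal u c := by
    rw [lowerBidiagonal_one_mul_upperBidiagonal d a c u l hu0
      (fun i i' h => by rw [hl i i' h, div_mul_cancel₀ _ (hpiv i')])
      (fun i i' h => by rw [hu i i' h, sub_add_cancel])]
    exact Matrix.ext hD
  have hdet : IsUnit D.det := by
    rw [hLU, det_mul, det_lowerBidiagonal, det_upperBidiagonal]
    simpa using Finset.prod_ne_zero_iff.mpr fun i _ => hpiv i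
  have hDP : D * P = M := by
    rw [hLU, Matrix.mul_assoc,
      upperBidiagonal_mul_eq_of_back_substitution u c Y P hpiv hPlast hPrec,
      lowerBidiagonal_one_mul_eq_of_forward_substitution l M Y hY0 hYrec]
  exact ⟨hdet, hDP, by rw [← hDP, nonsing_inv_mul_cancel_left _ _ hdet]⟩

/-- **Correctness of the Thomas algorithm for `D · P = M`.** Under the
tridiagonal setup with all pivots nonzero, `D` is invertible, and the matrix
`P` produced by the forward and backward substitution sweeps satisfies
`D · P = M`, i.e. `P = D⁻¹ · M`. -/
theorem thomas_algorithm_correct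
    (n : ℕ) (hn : 1 ≤ n) (d a c : Fin n → ℝ)
    (u l : Fin n → ℝ)
    (hu0 : ∀ i : Fin n, (i : ℕ) = 0 → u i = d i)
    (hl : ∀ i j : Fin n, (i : ℕ) = (j : ℕ) + 1 → l i = a i / u j)
    (hu : ∀ i j : Fin n, (i : ℕ) = (j : ℕ) + 1 → u i = d i - l i * c j)
    (hpiv : ∀ i : Fin n, u i ≠ 0)
    (D : Matrix (Fin n) (Fin n) ℝ)
    (hD : ∀ i j : Fin n, D i j =
      if i = j then d i
      else if (i : ℕ) = (j : ℕ) + 1 then a i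
      else if (j : ℕ) = (i : ℕ) + 1 then c i
      else 0)
    (m : ℕ) (M Y P : Matrix (Fin n) (Fin m) ℝ)
    (hY0 : ∀ i : Fin n, (i : ℕ) = 0 → ∀ j : Fin m, Y i j = M i j)
    (hYrec : ∀ i i' : Fin n, (i : ℕ) = (i' : ℕ) + 1 → ∀ j : Fin m,
      Y i j = M i j - l i * Y i' j)
    (hPlast : ∀ i : Fin n, (i : ℕ) + 1 = n → ∀ j : Fin m,
      P i j = (1 / u i) * Y i j)
    (hPrec : ∀ i i' : Fin n, (i' : ℕ) = (i : ℕ) + 1 → ∀ j : Fin m,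
      P i j = (1 / u i) * (Y i j - c i * P i' j)) :
    IsUnit D.det ∧ D * P = M ∧ P = D⁻¹ * M :=
  thomas_algorithm_correct_general n d a c u l hu0 hl hu hpiv D hD m M Y P hY0 hYrec hPlast hPrec
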